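/- arXiv:2211.01252 — 4 statements merged into one kernel-verified Lean document; each statement's English description precedes it below -/
import Mathlib

section
/- For all n ≥ 1 and all j ∈ {0,1,2}, the algebraic normal form of the mod-3 function Mod_{3,j} : F_2^n → F_2 is the XOR over all μ ∈ {0,...,n} with μ ≢ 3−j (mod 3) of the complete degree-μ symmetric function C_n^μ(x) = ⊕_{S⊆[n], |S|=μ} ∏_{i∈S} x_i. -/
/-!
Over `F_2` the monomial `∏_{i ∈ S} x_i` is `1` exactly when `S` lies in the support of `x`, so
`C_n^μ(x) ≡ binom(|x|, μ) (mod 2)` and the right-hand side only depends on the weight `w = |x|`.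
Pascal's rule turns `s_r(w) = Σ_{μ ≢ r} binom(w, μ) mod 2` into the recursion
`s_r(w + 1) = s_r(w) + s_{r-1}(w)`, which is solved by `s_r(w) = [w + r ≢ 0 (mod 3)]`;
with `r = 3 - j` this is `Mod_{3,j}`.
-/

open Finset

def completeSym (n μ : ℕ) (x : Fin n → ZMod 2) : ZMod 2 :=
  ∑ S ∈ Finset.univ.powersetCard μ, ∏ i ∈ S, x i

def mod3 (j : ℕ) {n : ℕ} (x : Fin n → ZMod 2) : ZMod 2 :=
  if (∑ i, (x i).val) % 3 = j then 0 else 1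

theorem Finset.sum_powersetCard_prod_boole {ι R : Type*} [CommSemiring R] (s : Finset ι)
    (p : ι → Prop) [DecidablePred p] (k : ℕ) :
    ∑ t ∈ s.powersetCard k, ∏ i ∈ t, (if p i then (1 : R) else 0) = (#(s.filter p)).choose k := by
  simp_rw [prod_boole, sum_boole, ← card_powersetCard]
  congr 2
  ext t
  simp only [mem_filter, mem_powersetCard, subset_iff]
  grind

theorem Finset.sum_range_choose_mul_of_le {R : Type*} [CommSemiring R] (f : ℕ → R) {w N : ℕ}
    (h : w ≤ N) :
    ∑ μ ∈ range (N + 1), (w.choose μ : R) * f μ = ∑ μ ∈ range (w + 1), (w.choose μ : R) * f μ := by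
  refine (sum_subset (range_subset_range.mpr (by omega)) fun μ _ hμ => ?_).symm
  rw [Nat.choose_eq_zero_of_lt (by simpa using hμ), Nat.cast_zero, zero_mul]

theorem ZMod.two_eq_boole (z : ZMod 2) : z = if z = 1 then 1 else 0 := by
  revert z; decide

theorem ZMod.sum_val_two_eq_card {ι : Type*} [Fintype ι] (x : ι → ZMod 2) :
    ∑ i, (x i).val = #(univ.filter (x · = 1)) := by
  have hval (z : ZMod 2) : z.val = if z = 1 then 1 else 0 := by revert z; decide
  simp_rw [hval, sum_boole, Nat.cast_id]

theorem completeSym_eq_choose_weight (n μ : ℕ) (x : Fin n → ZMod 2) :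
    completeSym n μ x = (∑ i, (x i).val).choose μ := by
  rw [ZMod.sum_val_two_eq_card, ← sum_powersetCard_prod_boole, completeSym]
  simp_rw [← ZMod.two_eq_boole]

theorem sum_choose_mul_mod_three_ne (w r : ℕ) :
    ∑ μ ∈ range (w + 1), (w.choose μ : ZMod 2) * (if μ % 3 = r % 3 then 0 else 1) =
      if (w + r) % 3 = 0 then 0 else 1 := by
  induction w generalizing r with
  | zero => simp [eq_comm]
  | succ w ih =>
    have hshift (μ : ℕ) : (μ + 1) % 3 = r % 3 ↔ μ % 3 = (r + 2) % 3 := by omega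
    have hpascal := sum_choose_succ_mul (R := ZMod 2) (fun μ _ => if μ % 3 = r % 3 then 0 else 1) w
    simp only [hshift] at hpascal
    rw [hpascal, ih, ih, show (w + 1 + r) % 3 = ((w + r) % 3 + 1) % 3 by omega,
      show (w + (r + 2)) % 3 = ((w + r) % 3 + 2) % 3 by omega]
    have hm : (w + r) % 3 < 3 := Nat.mod_lt _ three_pos
    generalize (w + r) % 3 = m at hm ⊢
    interval_cases m <;> decide

theorem mod3_anf_general (n : ℕ) (j : ℕ) (hj : j < 3) (x : Fin n → ZMod 2) :
    mod3 j x =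
      ∑ μ ∈ (Finset.range (n + 1)).filter (fun μ => ¬ (μ % 3 = (3 - j) % 3)),
        completeSym n μ x := by
  set w := ∑ i, (x i).val with hw_def
  have hw : w ≤ n := by
    simpa [hw_def, ZMod.sum_val_two_eq_card] using card_le_univ (univ.filter (x · = 1))
  symm
  calc ∑ μ ∈ (range (n + 1)).filter (fun μ => ¬ (μ % 3 = (3 - j) % 3)), completeSym n μ x
      = ∑ μ ∈ range (n + 1), (w.choose μ : ZMod 2) * (if μ % 3 = (3 - j) % 3 then 0 else 1) := by
        rw [sum_filter]
        refine sum_congr rfl fun μ _ => ?_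
        rw [completeSym_eq_choose_weight, ← hw_def]
        split_ifs <;> simp
    _ = ∑ μ ∈ range (w + 1), (w.choose μ : ZMod 2) * (if μ % 3 = (3 - j) % 3 then 0 else 1) :=
        sum_range_choose_mul_of_le _ hw
    _ = if (w + (3 - j)) % 3 = 0 then 0 else 1 := sum_choose_mul_mod_three_ne w (3 - j)
    _ = mod3 j x := by
        rw [mod3, ← hw_def]
        exact if_congr (by omega) rfl rfl

/-- The ANF of `Mod_{3,j}` is the XOR of all `C_n^μ` with `μ ≢ 3 - j (mod 3)`. -/
theorem mod3_anf (n : ℕ) (hn : 1 ≤ n) (j : ℕ) (hj : j < 3) (x : Fin n → ZMod 2) :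
    mod3 j x =
      ∑ μ ∈ (Finset.range (n + 1)).filter (fun μ => ¬ (μ % 3 = (3 - j) % 3)),
        completeSym n μ x :=
  mod3_anf_general n j hj x
end

section
/- Let n ≥ 1 and index rows and columns of a (2^n − 1) × (2^n − 1) real matrix by nonzero vectors y, s ∈ F_2^n. Define M_{y,s} = 2^{|y|−1} · χ(s ∩ y), where χ(A) = 1 if A ≠ ∅ and 0 otherwise, and where s ∩ y denotes the intersection of supports. Then M is invertible with inverse given by (M^{-1})_{s,y} = ((−1)^{s·y+1} / 2^{|y|−1}) · (1 − χ(s̄ ∩ ȳ)), where s̄ denotes the complement of the support of s in [n] and s·y is the size of the intersection of supports. -/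
open Finset

def supp {n : ℕ} (s : Fin n → ZMod 2) : Finset (Fin n) :=
  Finset.univ.filter (fun i => s i = 1)

/-!
Identify nonzero vectors with their (nonempty) supports. Since `1 - χ(Sᶜ ∩ Yᶜ)` is the indicator
of `Sᶜ ⊆ Y`, the powers of two cancel termwise in `(N * M)_{S,S'}`, which becomes minus the sum of
`(-1)^|S ∩ Y| χ(S' ∩ Y)` over the interval `[Sᶜ, univ]` of the Boolean lattice. Writing
`χ(S' ∩ Y) = 1 - [Y ⊆ S'ᶜ]` splits it into alternating sums over `[Sᶜ, univ]` and `[Sᶜ, S'ᶜ]`,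
and such a sum vanishes unless the interval is a single point. Hence `N * M = 1`, and over a field
a one-sided inverse of a square matrix is two-sided.
-/

namespace Finset

variable {α R : Type*} [DecidableEq α] [Ring R]

theorem sum_Icc_neg_one_pow_card_sdiff (s t : Finset α) :
    ∑ u ∈ Icc s t, (-1 : R) ^ #(u \ s) = if s = t then 1 else 0 := by
  by_cases hst : s ⊆ t
  · have hcancel : ∀ u ∈ (t \ s).powerset, (s ∪ u) \ s = u := fun u hu =>
      union_sdiff_cancel_left (disjoint_of_subset_right (mem_powerset.1 hu) disjoint_sdiff)
    have hsum := congrArg (Int.cast : ℤ → R) (sum_powerset_neg_one_pow_card (x := t \ s))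
    push_cast at hsum
    rw [Icc_eq_image_powerset hst, sum_image fun u hu v hv huv => by
      rw [← hcancel u hu, ← hcancel v hv, huv], sum_congr rfl fun u hu => by rw [hcancel u hu],
      hsum]
    exact if_congr (sdiff_eq_empty_iff_subset.trans ⟨subset_antisymm hst, fun h => h ▸ hst⟩)
      rfl rfl
  · rw [Icc_eq_empty hst, sum_empty, if_neg fun h => hst h.le]

variable [Fintype α]

theorem sum_Icc_compl_univ_neg_one_pow_mul_ite_nonempty {C : Finset α} (hC : C.Nonempty)
    (D : Finset α) :
    ∑ A ∈ Icc Cᶜ univ, (-1 : R) ^ #(C ∩ A) * (if (D ∩ A).Nonempty then 1 else 0) =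
      -if C = D then 1 else 0 := by
  have hsplit : ∀ A : Finset α, (-1 : R) ^ #(C ∩ A) * (if (D ∩ A).Nonempty then 1 else 0) =
      (-1 : R) ^ #(A \ Cᶜ) - if A ⊆ Dᶜ then (-1 : R) ^ #(A \ Cᶜ) else 0 := by
    intro A
    have hsub : A ⊆ Dᶜ ↔ ¬(D ∩ A).Nonempty := by
      rw [subset_compl_iff_disjoint_right, not_nonempty_iff_eq_empty, inter_comm,
        disjoint_iff_inter_eq_empty]
    simp only [sdiff_compl, inf_eq_inter, inter_comm A C, hsub]
    split_ifs <;> simp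
  have hfilter : {A ∈ Icc Cᶜ univ | A ⊆ Dᶜ} = Icc Cᶜ Dᶜ := by
    ext A; simp
  rw [sum_congr rfl fun A _ => hsplit A, sum_sub_distrib, ← sum_filter, hfilter,
    sum_Icc_neg_one_pow_card_sdiff, sum_Icc_neg_one_pow_card_sdiff]
  simp [compl_eq_univ_iff, hC.ne_empty]

theorem Icc_univ_eq_filter_subset (s : Finset α) :
    Icc s univ = {t ∈ (univ : Finset (Finset α)) | s ⊆ t} := by
  ext; simp

theorem sum_nonempty_subtype_eq_sum {M : Type*} [AddCommMonoid M] (f : Finset α → M)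
    (hf : f ∅ = 0) : ∑ A : {A : Finset α // A.Nonempty}, f A = ∑ A, f A := by
  rw [← sum_subtype (univ.erase ∅) (by simp [nonempty_iff_ne_empty]), sum_erase _ hf]

end Finset

section Sierpinski

open Matrix

variable (α K : Type*) [Fintype α] [DecidableEq α] [Field K]

def sierpinskiMatrix : Matrix {A : Finset α // A.Nonempty} {A : Finset α // A.Nonempty} K :=
  fun Y S => 2 ^ (#Y.1 - 1) * if (S.1 ∩ Y.1).Nonempty then 1 else 0

def sierpinskiInvMatrix : Matrix {A : Finset α // A.Nonempty} {A : Finset α // A.Nonempty} K :=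
  fun S Y => (-1) ^ (#(S.1 ∩ Y.1) + 1) / 2 ^ (#Y.1 - 1) *
    (1 - if (S.1ᶜ ∩ Y.1ᶜ).Nonempty then 1 else 0)

variable [NeZero (2 : K)]

theorem sierpinskiInvMatrix_mul_sierpinskiMatrix :
    sierpinskiInvMatrix α K * sierpinskiMatrix α K = 1 := by
  ext ⟨S, hS⟩ ⟨S', hS'⟩
  let f : Finset α → K := fun A =>
    if Sᶜ ⊆ A then -((-1) ^ #(S ∩ A) * if (S' ∩ A).Nonempty then 1 else 0) else 0
  have hterm : ∀ Y, sierpinskiInvMatrix α K ⟨S, hS⟩ Y * sierpinskiMatrix α K Y ⟨S', hS'⟩ =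
      f Y := by
    intro Y
    have hcompl : (Sᶜ ∩ Y.1ᶜ).Nonempty ↔ ¬ Sᶜ ⊆ Y := by
      rw [← not_disjoint_iff_nonempty_inter, disjoint_compl_right_iff]
    simp only [sierpinskiInvMatrix, sierpinskiMatrix, f, hcompl]
    split_ifs <;> field_simp <;> ring
  rw [mul_apply, one_apply, sum_congr rfl fun Y _ => hterm Y,
    sum_nonempty_subtype_eq_sum f (by simp [f]), ← sum_filter, sum_neg_distrib,
    ← Icc_univ_eq_filter_subset, sum_Icc_compl_univ_neg_one_pow_mul_ite_nonempty hS, neg_neg]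
  simp only [Subtype.mk.injEq]

theorem sierpinskiMatrix_mul_sierpinskiInvMatrix :
    sierpinskiMatrix α K * sierpinskiInvMatrix α K = 1 :=
  mul_eq_one_comm.mp (sierpinskiInvMatrix_mul_sierpinskiMatrix α K)

end Sierpinski

def suppEquiv (n : ℕ) : (Fin n → ZMod 2) ≃ Finset (Fin n) where
  toFun := supp
  invFun A i := if i ∈ A then 1 else 0
  left_inv s := funext fun i => by
    unfold supp
    rcases (by decide : ∀ a : ZMod 2, a = 0 ∨ a = 1) (s i) with h | h <;> simp [h]
  right_inv A := by ext; simp [supp]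

def suppNonemptyEquiv (n : ℕ) :
    {s : Fin n → ZMod 2 // s ≠ 0} ≃ {A : Finset (Fin n) // A.Nonempty} :=
  (suppEquiv n).subtypeEquiv fun s => by
    have hzero : suppEquiv n 0 = ∅ := by ext; simp [suppEquiv, supp]
    rw [nonempty_iff_ne_empty, ← hzero, Ne, Ne, (suppEquiv n).apply_eq_iff_eq]

theorem sierpinski_inverse_general (n : ℕ)
    (M N : Matrix {s : Fin n → ZMod 2 // s ≠ 0} {s : Fin n → ZMod 2 // s ≠ 0} ℚ)
    (hM : ∀ y s, M y s =
      2 ^ ((supp y.1).card - 1) * (if (supp s.1 ∩ supp y.1).Nonempty then 1 else 0))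
    (hN : ∀ s y, N s y =
      ((-1) ^ ((supp s.1 ∩ supp y.1).card + 1) / 2 ^ ((supp y.1).card - 1)) *
        (1 - (if ((supp s.1)ᶜ ∩ (supp y.1)ᶜ).Nonempty then 1 else 0))) :
    M * N = 1 ∧ N * M = 1 := by
  have hM' : M =
      (sierpinskiMatrix (Fin n) ℚ).submatrix (suppNonemptyEquiv n) (suppNonemptyEquiv n) :=
    Matrix.ext hM
  have hN' : N =
      (sierpinskiInvMatrix (Fin n) ℚ).submatrix (suppNonemptyEquiv n) (suppNonemptyEquiv n) :=
    Matrix.ext hN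
  rw [hM', hN', Matrix.submatrix_mul_equiv, Matrix.submatrix_mul_equiv,
    sierpinskiMatrix_mul_sierpinskiInvMatrix, sierpinskiInvMatrix_mul_sierpinskiMatrix,
    Matrix.submatrix_one_equiv]
  exact ⟨rfl, rfl⟩

/-- The matrix `M_{y,s} = 2^{|y|-1} χ(s ∩ y)` (rows/columns indexed by nonzero vectors)
is invertible, with inverse `(M⁻¹)_{s,y} = ((-1)^{s·y+1}/2^{|y|-1})(1 - χ(s̄ ∩ ȳ))`. -/
theorem sierpinski_inverse (n : ℕ) (hn : 1 ≤ n)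
    (M N : Matrix {s : Fin n → ZMod 2 // s ≠ 0} {s : Fin n → ZMod 2 // s ≠ 0} ℚ)
    (hM : ∀ y s, M y s =
      2 ^ ((supp y.1).card - 1) * (if (supp s.1 ∩ supp y.1).Nonempty then 1 else 0))
    (hN : ∀ s y, N s y =
      ((-1) ^ ((supp s.1 ∩ supp y.1).card + 1) / 2 ^ ((supp y.1).card - 1)) *
        (1 - (if ((supp s.1)ᶜ ∩ (supp y.1)ᶜ).Nonempty then 1 else 0))) :
    M * N = 1 ∧ N * M = 1 :=
  sierpinski_inverse_general n M N hM hN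
end

section
/- For all n ≥ 1 and all x ∈ F_2^n, the identity (−1)^{AND_n(x)} = cos((π/2^{n−1}) · ∑_{∅≠S⊆[n]} (−1)^{|S|−1} (⊕_{j∈S} x_j)) holds, where ⊕_{j∈S} x_j ∈ {0,1} is interpreted as an integer. -/
/-!
Write `σⱼ = (-1)^{xⱼ}`. The parity bit of `x` on `S` is `(1 - ∏_{j∈S} σⱼ) / 2`, so twice the
signed sum equals `∑_S ∏_{j∈S} (-σⱼ) - ∑_S (-1)^{|S|}` over all `S ⊆ [n]`. For `n ≥ 1` the
alternating count vanishes, while `∑_S ∏_{j∈S} (-σⱼ) = ∏ⱼ (1 - σⱼ) = 2^n · AND_n(x)`.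
Hence the argument of the cosine is `π · AND_n(x)`.
-/

open Finset

namespace ZMod

variable {R ι : Type*}

lemma neg_one_pow_val_add [Ring R] (a b : ZMod 2) :
    (-1 : R) ^ (a + b).val = (-1) ^ a.val * (-1) ^ b.val := by
  rw [val_add, ← pow_add, ← neg_one_pow_eq_pow_mod_two]

lemma neg_one_pow_val_sum [CommRing R] (s : Finset ι) (x : ι → ZMod 2) :
    (-1 : R) ^ (∑ j ∈ s, x j).val = ∏ j ∈ s, (-1) ^ (x j).val := by
  classical
  induction s using Finset.induction_on with
  | empty => simp
  | insert i s hi ih => rw [sum_insert hi, prod_insert hi, neg_one_pow_val_add, ih]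

lemma two_mul_val_eq_one_sub_neg_one_pow [Ring R] (a : ZMod 2) :
    2 * (a.val : R) = 1 - (-1) ^ a.val := by
  obtain h | h : a.val = 0 ∨ a.val = 1 := by have := a.val_lt; omega
  all_goals rw [h]; norm_num

lemma val_prod_two (s : Finset ι) (x : ι → ZMod 2) :
    (∏ j ∈ s, x j).val = ∏ j ∈ s, (x j).val :=
  map_prod ({ toFun := val, map_one' := rfl, map_mul' := by decide } : ZMod 2 →* ℕ) x s

end ZMod

open ZMod

section SignedParity

variable {R ι : Type*} [CommRing R]

lemma two_mul_signed_parity (s : Finset ι) (x : ι → ZMod 2) :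
    2 * ((-1 : R) ^ (#s - 1) * (∑ j ∈ s, x j).val) =
      ∏ j ∈ s, -(-1) ^ (x j).val - (-1) ^ #s := by
  rcases s.eq_empty_or_nonempty with rfl | hs
  · simp
  have hcard : (-1 : R) ^ #s = -(-1) ^ (#s - 1) := by
    rw [← Nat.sub_add_cancel hs.card_pos, pow_succ, Nat.add_sub_cancel, mul_neg_one]
  rw [mul_left_comm, two_mul_val_eq_one_sub_neg_one_pow, neg_one_pow_val_sum, prod_neg, hcard]
  ring

lemma two_mul_sum_signed_parity {s : Finset ι} (hs : s.Nonempty) (x : ι → ZMod 2) :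
    2 * ∑ t ∈ s.powerset, (-1 : R) ^ (#t - 1) * (∑ j ∈ t, x j).val =
      2 ^ #s * (∏ j ∈ s, x j).val := by
  have halt : ∑ t ∈ s.powerset, (-1 : R) ^ #t = 0 := by
    exact_mod_cast congrArg (Int.cast : ℤ → R) (sum_powerset_neg_one_pow_card_of_nonempty hs)
  rw [mul_sum, sum_congr rfl fun t _ => two_mul_signed_parity t x, sum_sub_distrib, halt,
    sub_zero, ← prod_one_add, val_prod_two, Nat.cast_prod, ← prod_const, ← prod_mul_distrib]
  refine prod_congr rfl fun j _ => ?_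
  rw [two_mul_val_eq_one_sub_neg_one_pow, sub_eq_add_neg]

end SignedParity

/-- Periodic Fourier decomposition of `AND_n`:
`(-1)^{AND_n(x)} = cos((π/2^{n-1}) ∑_{∅≠S⊆[n]} (-1)^{|S|-1} (⊕_{j∈S} x_j))`. -/
theorem and_periodic_fourier (n : ℕ) (hn : 1 ≤ n) (x : Fin n → ZMod 2) :
    ((-1 : ℝ) ^ (∏ i, x i).val) =
      Real.cos ((Real.pi / 2 ^ (n - 1)) *
        ∑ S ∈ Finset.univ.powerset.filter (fun S : Finset (Fin n) => S.Nonempty),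
          (-1 : ℝ) ^ (S.card - 1) * (((∑ j ∈ S, x j : ZMod 2)).val : ℝ)) := by
  have hne : (univ : Finset (Fin n)).Nonempty := univ_nonempty_iff.mpr ⟨⟨0, hn⟩⟩
  rw [sum_filter_of_ne fun S _ h => nonempty_iff_ne_empty.mpr (by rintro rfl; simp at h)]
  have hsum := two_mul_sum_signed_parity (R := ℝ) hne x
  have hpow : (2 : ℝ) ^ n = 2 * 2 ^ (n - 1) := by rw [← pow_succ', Nat.sub_add_cancel hn]
  rw [card_univ, Fintype.card_fin, hpow, mul_assoc] at hsum
  rw [mul_left_cancel₀ two_ne_zero hsum, ← mul_assoc, div_mul_cancel₀ _ (by positivity),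
    mul_comm, Real.cos_nat_mul_pi]
end

section
/- Let p ≥ 3 be prime and let ANF coefficients a_μ^{(j)} ∈ F_2 of Mod_{p,j}(x) = ⊕_{μ=0}^n a_μ^{(j)} C_n^μ(x) be arranged as vectors a_μ = (a_μ^{(0)},...,a_μ^{(p−1)}) ∈ F_2^p. Then they satisfy the linear recursion a_{μ+1} = M a_μ over F_2 where M = I + X^{(p)}, X^{(p)} being the cyclic shift matrix, with initial vector a_0 = (0,1,1,...,1)^T; moreover the kernel of M over F_2 is spanned by the all-ones vector, the all-ones vector is not in the image of M, and hence a_μ ≠ 0 for all μ ≥ 0. -/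
/-!
Splitting off the first variable shows that the top ANF coefficient on `μ + 1` variables is
`a_μ^{(j)} + a_μ^{(j-1)}`. For odd `p`, summing `v j + v (j - 1) = c` over `ZMod p` gives
`0 = p • c = c` in characteristic two, so `I + X` maps only constants to constants.
Since `a_0` is not constant, no `a_μ` is constant, in particular none is zero.
-/

open Finset

/-- `Mod_{p,j}` with index `j : ZMod p` : zero iff the Hamming weight is `j` mod `p`. -/
def modp (p : ℕ) (j : ZMod p) {n : ℕ} (x : Fin n → ZMod 2) : ZMod 2 :=
  if ((∑ i, (x i).val : ℕ) : ZMod p) = j then 0 else 1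

/-- The degree-`μ` ANF coefficient `a_μ^{(j)}` of the symmetric function `Mod_{p,j}`,
equal to the top ANF coefficient of `Mod_{p,j}` on `μ` variables. -/
def anfVec (p : ℕ) (μ : ℕ) (j : ZMod p) : ZMod 2 :=
  ∑ x : Fin μ → ZMod 2, modp p j x

section CyclicShift

variable {R : Type*} [Ring R] [CharP R 2] {p : ℕ}

theorem add_shift_eq_zero_iff_const [NeZero p] (v : ZMod p → R) :
    (∀ j, v j + v (j - 1) = 0) ↔ ∃ c : R, v = fun _ => c := by
  simp_rw [CharTwo.add_eq_zero]
  constructor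
  · intro h
    have hnat : ∀ n : ℕ, v n = v 0 := by
      intro n
      induction n with
      | zero => simp
      | succ k ih => rw [h, Nat.cast_succ, add_sub_cancel_right, ih]
    exact ⟨v 0, funext fun j => by simpa using hnat j.val⟩
  · rintro ⟨c, rfl⟩ j
    rfl

theorem eq_zero_of_add_shift_eq_const (hp : Odd p) {v : ZMod p → R} {c : R}
    (h : ∀ j, v j + v (j - 1) = c) : c = 0 := by
  have : NeZero p := ⟨hp.pos.ne'⟩
  have hshift : ∑ j : ZMod p, v (j - 1) = ∑ j, v j :=
    Fintype.sum_equiv (Equiv.subRight 1) _ _ fun _ => rfl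
  calc c = (p : R) * c := by
        rw [CharTwo.natCast_eq_ite, if_neg (Nat.not_even_iff_odd.mpr hp), one_mul]
    _ = ∑ j, (v j + v (j - 1)) := by simp [h, ZMod.card, nsmul_eq_mul]
    _ = 0 := by rw [sum_add_distrib, hshift, CharTwo.add_self_eq_zero]

theorem const_of_add_shift_eq_const (hp : Odd p) {v : ZMod p → R} {c : R}
    (h : ∀ j, v j + v (j - 1) = c) : ∃ d : R, v = fun _ => d := by
  have : NeZero p := ⟨hp.pos.ne'⟩
  rw [← add_shift_eq_zero_iff_const]
  rwa [eq_zero_of_add_shift_eq_const hp h] at h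

end CyclicShift

theorem modp_cons (p : ℕ) (j : ZMod p) {n : ℕ} (a : ZMod 2) (x : Fin n → ZMod 2) :
    modp p j (Fin.cons a x : Fin (n + 1) → ZMod 2) = modp p (j - a.val) x := by
  simp only [modp, Fin.sum_univ_succ, Fin.cons_zero, Fin.cons_succ, Nat.cast_add,
    eq_sub_iff_add_eq, add_comm]

theorem anfVec_zero (p : ℕ) (j : ZMod p) : anfVec p 0 j = if j = 0 then 0 else 1 := by
  simp [anfVec, modp, eq_comm]

theorem anfVec_succ (p μ : ℕ) (j : ZMod p) :
    anfVec p (μ + 1) j = anfVec p μ j + anfVec p μ (j - 1) := by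
  rw [anfVec, ← (Fin.consEquiv fun _ => ZMod 2).sum_comp, Fintype.sum_prod_type]
  simp only [Fin.consEquiv, Equiv.coe_fn_mk, modp_cons]
  rw [show (univ : Finset (ZMod 2)) = {0, 1} by decide, sum_pair zero_ne_one,
    ZMod.val_zero, ZMod.val_one, Nat.cast_zero, Nat.cast_one, sub_zero]
  rfl

theorem anfVec_ne_const {p : ℕ} (hp : Odd p) (hp1 : 1 < p) (μ : ℕ) :
    ¬ ∃ c : ZMod 2, anfVec p μ = fun _ => c := by
  induction μ with
  | zero =>
    have : Fact (1 < p) := ⟨hp1⟩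
    rintro ⟨c, hc⟩
    have h0 := congrFun hc 0
    have h1 := congrFun hc 1
    simp only [anfVec_zero, if_pos, one_ne_zero, if_false] at h0 h1
    exact zero_ne_one (h0.trans h1.symm)
  | succ μ ih =>
    rintro ⟨c, hc⟩
    exact ih (const_of_add_shift_eq_const hp fun j => by rw [← anfVec_succ, hc])

/-- The ANF coefficient vectors of the mod-`p` functions satisfy `a_{μ+1} = (I + X) a_μ`
with `a_0 = (0,1,…,1)`; over `F_2` the kernel of `I + X` is spanned by the all-ones
vector, the all-ones vector is not in its image, and hence `a_μ ≠ 0` for all `μ`. -/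
theorem modp_anf_recursion (p : ℕ) (hp : p.Prime) (hp3 : 3 ≤ p) :
    (∀ j : ZMod p, anfVec p 0 j = if j = 0 then 0 else 1) ∧
    (∀ (μ : ℕ) (j : ZMod p), anfVec p (μ + 1) j = anfVec p μ j + anfVec p μ (j - 1)) ∧
    (∀ v : ZMod p → ZMod 2,
      (∀ j, v j + v (j - 1) = 0) ↔ ∃ c : ZMod 2, v = fun _ => c) ∧
    (¬ ∃ v : ZMod p → ZMod 2, ∀ j, v j + v (j - 1) = 1) ∧
    (∀ μ : ℕ, ∃ j : ZMod p, anfVec p μ j ≠ 0) := by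
  have hodd : Odd p := hp.odd_of_ne_two (by omega)
  have : NeZero p := ⟨hp.ne_zero⟩
  refine ⟨anfVec_zero p, anfVec_succ p, add_shift_eq_zero_iff_const, ?_, fun μ => ?_⟩
  · rintro ⟨v, hv⟩
    exact one_ne_zero (eq_zero_of_add_shift_eq_const hodd hv)
  · by_contra! h
    exact anfVec_ne_const hodd hp.one_lt μ ⟨0, funext h⟩
end
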